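/- Let ε ∈ [0,1], and let w^+ = (w^+_1,…,w^+_m) and w^- = (w^-_1,…,w^-_m) be vectors of positive weights satisfying (1−ε)·w^+_i ≤ w^-_i ≤ w^+_i for every i ∈ {1,…,m}. Then E_T(w^-) ≥ (1−ε)·E_T(w^+). -/
import Mathlib

open Finset

/-- MNL choice probability for a single customer offered products with weights `w`:
outcome `some i` (select product `i`) has probability `w i / (1 + ∑ j, w j)`, and
outcome `none` (no purchase) has probability `1 / (1 + ∑ j, w j)`. -/
noncomputable def mnlProb {k : ℕ} (w : Fin k → ℝ) : Option (Fin k) → ℝ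
  | none => 1 / (1 + ∑ j, w j)
  | some i => w i / (1 + ∑ j, w j)

/-- The load of product `i`: the number of customers `t` selecting product `i`,
given the outcome `f` of the `T` customers' choices. -/
def loadCount {k T : ℕ} (f : Fin T → Option (Fin k)) (i : Fin k) : ℕ :=
  (Finset.univ.filter fun t => f t = some i).card

/-- `ET T k w` is the expected maximum load when products with weights `w 0, …, w (k-1)`
are statically offered to `T` customers making independent MNL choices; the loads form
a multinomial random vector. -/
noncomputable def ET (T k : ℕ) (w : Fin k → ℝ) : ℝ :=
  ∑ f : Fin T → Option (Fin k),
    (∏ t, mnlProb w (f t)) * ((Finset.univ.sup (loadCount f) : ℕ) : ℝ)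

/-- Thinning kernel: from state `some i`, stay with probability `r i`, drop to `none`
with probability `1 - r i`; from `none`, stay at `none`. -/
noncomputable def ker {m : ℕ} (r : Fin m → ℝ) : Option (Fin m) → Option (Fin m) → ℝ
  | none, none => 1
  | none, some _ => 0
  | some i, none => 1 - r i
  | some i, some j => if j = i then r i else 0

lemma ker_nonneg {m : ℕ} {r : Fin m → ℝ} (hr0 : ∀ i, 0 ≤ r i) (hr1 : ∀ i, r i ≤ 1) :
    ∀ a b, 0 ≤ ker r a b
  | none, none => zero_le_one
  | none, some _ => le_refl 0
  | some i, none => by simp only [ker]; linarith [hr1 i]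
  | some i, some j => by
      by_cases h : j = i <;> simp [ker, h, hr0]

lemma ker_col_some {m : ℕ} (r : Fin m → ℝ) (a : Option (Fin m)) (i : Fin m) :
    ker r a (some i) = if a = some i then r i else 0 := by
  cases a with
  | none => simp [ker]
  | some j =>
      by_cases h : j = i
      · subst h; simp [ker]
      · simp [ker, h, Ne.symm h]

lemma ker_row_sum {m : ℕ} (r : Fin m → ℝ) (a : Option (Fin m)) :
    ∑ b, ker r a b = 1 := by
  cases a with
  | none => rw [Fintype.sum_option]; simp [ker]
  | some i => rw [Fintype.sum_option]; simp [ker]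

lemma ker_expand {m T : ℕ} (p : Option (Fin m) → ℝ) (r : Fin m → ℝ)
    (φ : (Fin T → Option (Fin m)) → ℝ) :
    ∑ g : Fin T → Option (Fin m), (∏ t, ∑ a, p a * ker r a (g t)) * φ g
      = ∑ f : Fin T → Option (Fin m), (∏ t, p (f t)) *
          (∑ g : Fin T → Option (Fin m), (∏ t, ker r (f t) (g t)) * φ g) := by
  calc ∑ g : Fin T → Option (Fin m), (∏ t, ∑ a, p a * ker r a (g t)) * φ g
      = ∑ g : Fin T → Option (Fin m),
          (∑ f : Fin T → Option (Fin m), ∏ t, p (f t) * ker r (f t) (g t)) * φ g := by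
        refine Finset.sum_congr rfl fun g _ => ?_
        rw [Fintype.prod_sum (fun t a => p a * ker r a (g t))]
    _ = ∑ g : Fin T → Option (Fin m), ∑ f : Fin T → Option (Fin m),
          (∏ t, p (f t) * ker r (f t) (g t)) * φ g := by
        refine Finset.sum_congr rfl fun g _ => ?_
        rw [Finset.sum_mul]
    _ = ∑ f : Fin T → Option (Fin m), ∑ g : Fin T → Option (Fin m),
          (∏ t, p (f t) * ker r (f t) (g t)) * φ g := Finset.sum_comm
    _ = ∑ f : Fin T → Option (Fin m), (∏ t, p (f t)) *
          (∑ g : Fin T → Option (Fin m), (∏ t, ker r (f t) (g t)) * φ g) := by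
        refine Finset.sum_congr rfl fun f _ => ?_
        rw [Finset.mul_sum]
        refine Finset.sum_congr rfl fun g _ => ?_
        rw [Finset.prod_mul_distrib]; ring

lemma ker_total {m T : ℕ} (r : Fin m → ℝ) (f : Fin T → Option (Fin m)) :
    ∑ g : Fin T → Option (Fin m), ∏ t, ker r (f t) (g t) = 1 := by
  rw [← Fintype.prod_sum (fun t b => ker r (f t) b)]
  exact Finset.prod_eq_one fun t _ => ker_row_sum r (f t)

lemma inner_le {m T : ℕ} {r : Fin m → ℝ} (hr0 : ∀ i, 0 ≤ r i) (hr1 : ∀ i, r i ≤ 1)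
    (f : Fin T → Option (Fin m)) :
    ∑ g : Fin T → Option (Fin m), (∏ t, ker r (f t) (g t)) *
        ((Finset.univ.sup (loadCount g) : ℕ) : ℝ)
      ≤ ((Finset.univ.sup (loadCount f) : ℕ) : ℝ) := by
  have h1 := ker_total r f
  have h2 : ∀ g : Fin T → Option (Fin m),
      (∏ t, ker r (f t) (g t)) * ((Finset.univ.sup (loadCount g) : ℕ) : ℝ)
        ≤ (∏ t, ker r (f t) (g t)) * ((Finset.univ.sup (loadCount f) : ℕ) : ℝ) := by
    intro g
    by_cases hz : (∏ t, ker r (f t) (g t)) = 0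
    · rw [hz, zero_mul, zero_mul]
    · have hpos : 0 ≤ ∏ t, ker r (f t) (g t) :=
        Finset.prod_nonneg fun t _ => ker_nonneg hr0 hr1 _ _
      refine mul_le_mul_of_nonneg_left ?_ hpos
      have hload : ∀ i, loadCount g i ≤ loadCount f i := by
        intro i
        apply Finset.card_le_card
        intro t ht
        simp only [Finset.mem_filter, Finset.mem_univ, true_and] at ht ⊢
        have hk : ker r (f t) (g t) ≠ 0 := by
          intro h0
          exact hz (Finset.prod_eq_zero (Finset.mem_univ t) h0)
        rw [ht, ker_col_some] at hk
        by_contra hne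
        simp [hne] at hk
      exact_mod_cast Finset.sup_mono_fun fun i _ => hload i
  calc ∑ g : Fin T → Option (Fin m), (∏ t, ker r (f t) (g t)) *
        ((Finset.univ.sup (loadCount g) : ℕ) : ℝ)
      ≤ ∑ g : Fin T → Option (Fin m), (∏ t, ker r (f t) (g t)) *
        ((Finset.univ.sup (loadCount f) : ℕ) : ℝ) :=
        Finset.sum_le_sum fun g _ => h2 g
    _ = ((Finset.univ.sup (loadCount f) : ℕ) : ℝ) := by
        rw [← Finset.sum_mul, h1, one_mul]

lemma pin_coord {m T : ℕ} (r : Fin m → ℝ) (f : Fin T → Option (Fin m))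
    (t : Fin T) (i : Fin m) :
    ∑ g : Fin T → Option (Fin m),
        (∏ t', ker r (f t') (g t')) * (if g t = some i then (1:ℝ) else 0)
      = ker r (f t) (some i) := by
  have hpt : ∀ g : Fin T → Option (Fin m),
      (∏ t', ker r (f t') (g t')) * (if g t = some i then (1:ℝ) else 0)
        = ∏ t', (ker r (f t') (g t') *
            (if t' = t then (if g t' = some i then (1:ℝ) else 0) else 1)) := by
    intro g
    rw [Finset.prod_mul_distrib]
    congr 1
    rw [Finset.prod_ite_eq' Finset.univ t (fun t' => if g t' = some i then (1:ℝ) else 0)]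
    simp
  calc ∑ g : Fin T → Option (Fin m),
        (∏ t', ker r (f t') (g t')) * (if g t = some i then (1:ℝ) else 0)
      = ∑ g : Fin T → Option (Fin m), ∏ t', (ker r (f t') (g t') *
            (if t' = t then (if g t' = some i then (1:ℝ) else 0) else 1)) :=
        Finset.sum_congr rfl fun g _ => hpt g
    _ = ∏ t', ∑ b, (ker r (f t') b *
            (if t' = t then (if b = some i then (1:ℝ) else 0) else 1)) := by
        rw [← Fintype.prod_sum (fun t' b => ker r (f t') b *
            (if t' = t then (if b = some i then (1:ℝ) else 0) else 1))]
    _ = ker r (f t) (some i) := by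
        rw [Finset.prod_eq_single t]
        · simp [mul_ite]
        · intro t' _ ht'
          simp only [if_neg ht', mul_one]
          exact ker_row_sum r (f t')
        · simp

lemma inner_ge {m T : ℕ} {r : Fin m → ℝ} {c : ℝ} (hc : 0 ≤ c)
    (hr0 : ∀ i, 0 ≤ r i) (hr1 : ∀ i, r i ≤ 1) (hrc : ∀ i, c ≤ r i)
    (hm : 0 < m) (f : Fin T → Option (Fin m)) :
    c * ((Finset.univ.sup (loadCount f) : ℕ) : ℝ)
      ≤ ∑ g : Fin T → Option (Fin m), (∏ t, ker r (f t) (g t)) *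
          ((Finset.univ.sup (loadCount g) : ℕ) : ℝ) := by
  obtain ⟨i, -, hi⟩ := Finset.exists_mem_eq_sup (Finset.univ : Finset (Fin m))
    ⟨⟨0, hm⟩, Finset.mem_univ _⟩ (loadCount f)
  have key : ∑ g : Fin T → Option (Fin m), (∏ t, ker r (f t) (g t)) *
      ((loadCount g i : ℕ) : ℝ) = r i * ((loadCount f i : ℕ) : ℝ) := by
    have hcast : ∀ g : Fin T → Option (Fin m),
        ((loadCount g i : ℕ) : ℝ) = ∑ t, (if g t = some i then (1:ℝ) else 0) := by
      intro g
      rw [loadCount, Finset.card_filter]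
      push_cast
      rfl
    calc ∑ g : Fin T → Option (Fin m), (∏ t, ker r (f t) (g t)) *
          ((loadCount g i : ℕ) : ℝ)
        = ∑ g : Fin T → Option (Fin m), ∑ t,
            (∏ t', ker r (f t') (g t')) * (if g t = some i then (1:ℝ) else 0) := by
          refine Finset.sum_congr rfl fun g _ => ?_
          rw [hcast g, Finset.mul_sum]
      _ = ∑ t, ∑ g : Fin T → Option (Fin m),
            (∏ t', ker r (f t') (g t')) * (if g t = some i then (1:ℝ) else 0) :=
          Finset.sum_comm
      _ = ∑ t, ker r (f t) (some i) :=
          Finset.sum_congr rfl fun t _ => pin_coord r f t i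
      _ = ∑ t, (if f t = some i then r i else 0) :=
          Finset.sum_congr rfl fun t _ => ker_col_some r (f t) i
      _ = r i * ((loadCount f i : ℕ) : ℝ) := by
          rw [← Finset.sum_filter, Finset.sum_const, loadCount]
          simp [mul_comm]
  calc c * ((Finset.univ.sup (loadCount f) : ℕ) : ℝ)
      = c * ((loadCount f i : ℕ) : ℝ) := by rw [hi]
    _ ≤ r i * ((loadCount f i : ℕ) : ℝ) :=
        mul_le_mul_of_nonneg_right (hrc i) (Nat.cast_nonneg _)
    _ = ∑ g : Fin T → Option (Fin m), (∏ t, ker r (f t) (g t)) *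
          ((loadCount g i : ℕ) : ℝ) := key.symm
    _ ≤ ∑ g : Fin T → Option (Fin m), (∏ t, ker r (f t) (g t)) *
          ((Finset.univ.sup (loadCount g) : ℕ) : ℝ) := by
        refine Finset.sum_le_sum fun g _ => ?_
        refine mul_le_mul_of_nonneg_left ?_
          (Finset.prod_nonneg fun t _ => ker_nonneg hr0 hr1 _ _)
        exact Nat.cast_le.mpr (Finset.le_sup (Finset.mem_univ i))

lemma mnl_nonneg {k : ℕ} {w : Fin k → ℝ} (hw : ∀ i, 0 < w i) (a : Option (Fin k)) :
    0 ≤ mnlProb w a := by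
  have hs : (0:ℝ) ≤ ∑ j, w j := Finset.sum_nonneg fun j _ => (hw j).le
  cases a with
  | none => exact div_nonneg zero_le_one (by linarith)
  | some i => exact div_nonneg (hw i).le (by linarith)

theorem expected_max_load_weight_sensitivity
    (ε : ℝ) (hε0 : 0 ≤ ε) (hε1 : ε ≤ 1) (T m : ℕ)
    (wp wm : Fin m → ℝ) (hwp : ∀ i, 0 < wp i) (hwm : ∀ i, 0 < wm i)
    (hlow : ∀ i, (1 - ε) * wp i ≤ wm i) (hhigh : ∀ i, wm i ≤ wp i) :
    ET T m wm ≥ (1 - ε) * ET T m wp := by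
  rcases Nat.eq_zero_or_pos m with hm | hm
  · subst hm
    have h0 : ∀ w : Fin 0 → ℝ, ET T 0 w = 0 := by
      intro w
      refine Finset.sum_eq_zero fun f _ => ?_
      simp
    rw [h0, h0, mul_zero]
  · have hsp : (0:ℝ) ≤ ∑ j, wp j := Finset.sum_nonneg fun j _ => (hwp j).le
    have hsm : (0:ℝ) ≤ ∑ j, wm j := Finset.sum_nonneg fun j _ => (hwm j).le
    have hSp : (0:ℝ) < 1 + ∑ j, wp j := by linarith
    have hSm : (0:ℝ) < 1 + ∑ j, wm j := by linarith
    have hsum : (∑ j, wm j) ≤ ∑ j, wp j := Finset.sum_le_sum fun j _ => hhigh j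
    set rA : Fin m → ℝ := fun i => wm i / wp i with hrA
    set rB : Fin m → ℝ := fun _ => (1 + ∑ j, wm j) / (1 + ∑ j, wp j) with hrB
    have hrA0 : ∀ i, 0 ≤ rA i := fun i => div_nonneg (hwm i).le (hwp i).le
    have hrA1 : ∀ i, rA i ≤ 1 := fun i => (div_le_one (hwp i)).mpr (hhigh i)
    have hrAc : ∀ i, 1 - ε ≤ rA i := fun i => (le_div_iff₀ (hwp i)).mpr (hlow i)
    have hrB0 : ∀ i, 0 ≤ rB i := fun i => div_nonneg hSm.le hSp.le
    have hrB1 : ∀ i, rB i ≤ 1 := fun i => (div_le_one hSp).mpr (by linarith)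
    -- the two pushforwards coincide
    have hq : ∀ b, ∑ a, mnlProb wp a * ker rA a b = ∑ a, mnlProb wm a * ker rB a b := by
      intro b
      cases b with
      | some i =>
          have hw : ∀ (w r : Fin m → ℝ),
              ∑ a : Option (Fin m), mnlProb w a * ker r a (some i)
                = mnlProb w (some i) * r i := by
            intro w r
            rw [Fintype.sum_option]
            simp only [ker_col_some]
            have hterm : ∀ j : Fin m,
                (mnlProb w (some j) * if some j = some i then r i else 0)
                  = if j = i then mnlProb w (some j) * r i else 0 := by
              intro j; by_cases h : j = i <;> simp [h]
            rw [Finset.sum_congr rfl fun j _ => hterm j]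
            simp
          rw [hw wp rA, hw wm rB]
          simp only [mnlProb, hrA, hrB]
          have h1 : wp i ≠ 0 := (hwp i).ne'
          have h2 : (1 + ∑ j, wp j) ≠ 0 := hSp.ne'
          have h3 : (1 + ∑ j, wm j) ≠ 0 := hSm.ne'
          field_simp
      | none =>
          rw [Fintype.sum_option, Fintype.sum_option]
          simp only [ker, mnlProb, mul_one, hrA, hrB]
          have e1 : ∑ j, wp j / (1 + ∑ j, wp j) * (1 - wm j / wp j)
              = (∑ j, (wp j - wm j)) / (1 + ∑ j, wp j) := by
            rw [Finset.sum_div]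
            refine Finset.sum_congr rfl fun j _ => ?_
            have h1 : wp j ≠ 0 := (hwp j).ne'
            have h2 : (1 + ∑ j, wp j) ≠ 0 := hSp.ne'
            field_simp
          have e2 : ∑ j, wm j / (1 + ∑ j, wm j) *
              (1 - (1 + ∑ j, wm j) / (1 + ∑ j, wp j))
              = (∑ j, wm j) / (1 + ∑ j, wm j) *
                (1 - (1 + ∑ j, wm j) / (1 + ∑ j, wp j)) := by
            rw [← Finset.sum_mul, Finset.sum_div]
          rw [e1, e2, Finset.sum_sub_distrib]
          field_simp
          ring
    have stepA : (1 - ε) * ET T m wp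
        ≤ ∑ g : Fin T → Option (Fin m),
            (∏ t, ∑ a, mnlProb wp a * ker rA a (g t)) *
              ((Finset.univ.sup (loadCount g) : ℕ) : ℝ) := by
      rw [ker_expand]
      simp only [ET]
      rw [Finset.mul_sum]
      refine Finset.sum_le_sum fun f _ => ?_
      have hin := inner_ge (c := 1 - ε) (by linarith) hrA0 hrA1 hrAc hm f
      have hp : 0 ≤ ∏ t, mnlProb wp (f t) :=
        Finset.prod_nonneg fun t _ => mnl_nonneg hwp _
      calc (1 - ε) * ((∏ t, mnlProb wp (f t)) *
              ((Finset.univ.sup (loadCount f) : ℕ) : ℝ))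
          = (∏ t, mnlProb wp (f t)) *
              ((1 - ε) * ((Finset.univ.sup (loadCount f) : ℕ) : ℝ)) := by ring
        _ ≤ (∏ t, mnlProb wp (f t)) *
              (∑ g : Fin T → Option (Fin m), (∏ t, ker rA (f t) (g t)) *
                ((Finset.univ.sup (loadCount g) : ℕ) : ℝ)) :=
            mul_le_mul_of_nonneg_left hin hp
    have stepB : ∑ g : Fin T → Option (Fin m),
            (∏ t, ∑ a, mnlProb wm a * ker rB a (g t)) *
              ((Finset.univ.sup (loadCount g) : ℕ) : ℝ) ≤ ET T m wm := by
      rw [ker_expand]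
      simp only [ET]
      exact Finset.sum_le_sum fun f _ => mul_le_mul_of_nonneg_left
        (inner_le hrB0 hrB1 f)
        (Finset.prod_nonneg fun t _ => mnl_nonneg hwm _)
    have hmid : ∑ g : Fin T → Option (Fin m),
            (∏ t, ∑ a, mnlProb wp a * ker rA a (g t)) *
              ((Finset.univ.sup (loadCount g) : ℕ) : ℝ)
        = ∑ g : Fin T → Option (Fin m),
            (∏ t, ∑ a, mnlProb wm a * ker rB a (g t)) *
              ((Finset.univ.sup (loadCount g) : ℕ) : ℝ) := by
      refine Finset.sum_congr rfl fun g _ => ?_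
      rw [Finset.prod_congr rfl fun t _ => hq (g t)]
    linarith
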